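/- With the operators of the type-B₂ positive representation for w₀ = s₂s₁s₂s₁ defined in the context, the following operator identities hold on the space of all functions ℂ⁴ → ℂ: e₁ ∘ f₂ = f₂ ∘ e₁, e₂ ∘ f₁ = f₁ ∘ e₂, e₁ ∘ f₁ − f₁ ∘ e₁ = (q_s − q_s⁻¹)·(K₁⁻¹ − K₁), and e₂ ∘ f₂ − f₂ ∘ e₂ = (q − q⁻¹)·(K₂⁻¹ − K₂). -/
import Mathlib


noncomputable section

open Complex

/-- The space of operators on all functions `ℂ⁴ → ℂ`. -/
abbrev OpB : Type := Module.End ℂ ((Fin 4 → ℂ) → ℂ)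

/-- Weyl operator `W(ℓ,δ)`: `(W(ℓ,δ) f)(x) = exp(ℓ(x + δ/2)) · f(x + δ)`. -/
def Wop (ℓ : (Fin 4 → ℂ) → ℂ) (δ : Fin 4 → ℂ) : OpB where
  toFun f := fun x => Complex.exp (ℓ (x + (2 : ℂ)⁻¹ • δ)) * f (x + δ)
  map_add' f g := by funext x; simp [mul_add]
  map_smul' c f := by funext x; simp [smul_eq_mul]; ring

/-- `b_s = b/√2`. -/
def bs (b : ℝ) : ℝ := b / Real.sqrt 2

/-- `q = exp(π i b²)`. -/
def qq (b : ℝ) : ℂ := Complex.exp ((Real.pi : ℂ) * Complex.I * (b : ℂ) ^ 2)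

/-- `q_s = exp(π i b_s²)`. -/
def qs (b : ℝ) : ℂ := Complex.exp ((Real.pi : ℂ) * Complex.I * ((bs b : ℝ) : ℂ) ^ 2)

/-- The affine functional `ℓ_α = π (b_s (ct·t + cv·v + cl1·λ₁) + b (cu·u + cw·w + cl2·λ₂))`,
where `(t,u,v,w) = (x 0, x 1, x 2, x 3)`. -/
def ellB (b lam1 lam2 ct cu cv cw cl1 cl2 : ℝ) : (Fin 4 → ℂ) → ℂ := fun x =>
  (Real.pi : ℂ) * (((bs b : ℝ) : ℂ) * (ct * x 0 + cv * x 2 + cl1 * lam1)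
    + (b : ℂ) * (cu * x 1 + cw * x 3 + cl2 * lam2))

/-- The shift vector `δ = (−i b_s d_t, −i b d_u, −i b_s d_v, −i b d_w)`. -/
def deltaB (b dt du dv dw : ℝ) : Fin 4 → ℂ :=
  ![-Complex.I * ((bs b : ℝ) : ℂ) * dt, -Complex.I * (b : ℂ) * du,
    -Complex.I * ((bs b : ℝ) : ℂ) * dv, -Complex.I * (b : ℂ) * dw]

/-- The operator `[α]e(d_t p_t + d_u p_u + d_v p_v + d_w p_w) = W(ℓ_α,δ) + W(−ℓ_α,δ)`. -/
def brB (b lam1 lam2 ct cu cv cw cl1 cl2 dt du dv dw : ℝ) : OpB :=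
  Wop (ellB b lam1 lam2 ct cu cv cw cl1 cl2) (deltaB b dt du dv dw)
    + Wop (fun x => -(ellB b lam1 lam2 ct cu cv cw cl1 cl2 x)) (deltaB b dt du dv dw)

/-- `K₁ = W(π(b_s(2λ₁−2t−2v) + b(u+w)), 0)`. -/
def K1 (b lam1 lam2 : ℝ) : OpB := Wop (ellB b lam1 lam2 (-2) 1 (-2) 1 2 0) 0

/-- `K₁⁻¹`, the multiplication operator with negated exponent. -/
def K1inv (b lam1 lam2 : ℝ) : OpB := Wop (ellB b lam1 lam2 2 (-1) 2 (-1) (-2) 0) 0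

/-- `K₂ = W(π(b(2λ₂−2u−2w) + b_s(2t+2v)), 0)`. -/
def K2 (b lam1 lam2 : ℝ) : OpB := Wop (ellB b lam1 lam2 2 (-2) 2 (-2) 0 2) 0

/-- `K₂⁻¹`, the multiplication operator with negated exponent. -/
def K2inv (b lam1 lam2 : ℝ) : OpB := Wop (ellB b lam1 lam2 (-2) 2 (-2) 2 0 (-2)) 0

/-- `e₁ = [t]e(−p_t)`. -/
def e1 (b lam1 lam2 : ℝ) : OpB := brB b lam1 lam2 1 0 0 0 0 0 (-1) 0 0 0

/-- `e₂ = [w]e(2p_t−2p_v−p_w) + [u−2t]e(−p_u) + (q_s+q_s⁻¹)[v−t]e(p_t−p_u−p_v)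
    + [2v−u]e(2p_t−p_u−2p_v)`. -/
def e2 (b lam1 lam2 : ℝ) : OpB :=
  brB b lam1 lam2 0 0 0 1 0 0 2 0 (-2) (-1)
    + brB b lam1 lam2 (-2) 1 0 0 0 0 0 (-1) 0 0
    + (qs b + (qs b)⁻¹) • brB b lam1 lam2 (-1) 0 1 0 0 0 1 (-1) (-1) 0
    + brB b lam1 lam2 0 (-1) 2 0 0 0 2 (-1) (-2) 0

/-- `f₁ = [2λ₁−v+w]e(p_v) + [2λ₁−t+u−2v+w]e(p_t)`. -/
def f1 (b lam1 lam2 : ℝ) : OpB :=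
  brB b lam1 lam2 0 0 (-1) 1 2 0 0 0 1 0
    + brB b lam1 lam2 (-1) 1 (-2) 1 2 0 1 0 0 0

/-- `f₂ = [2λ₂−w]e(p_w) + [2λ₂−u+2v−2w]e(p_u)`. -/
def f2 (b lam1 lam2 : ℝ) : OpB :=
  brB b lam1 lam2 0 0 0 (-1) 0 2 0 0 0 1
    + brB b lam1 lam2 0 (-1) 2 (-2) 0 2 0 1 0 0

/-- The B₂ Cartan matrix `a₁₁ = a₂₂ = 2, a₁₂ = −2, a₂₁ = −1`. -/
def aB : Fin 2 → Fin 2 → ℤ := ![![2, -2], ![-1, 2]]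

/-- `q₁ = q_s`, `q₂ = q`. -/
def qi (b : ℝ) : Fin 2 → ℂ := ![qs b, qq b]

/-- The pair of `e`-generators. -/
def eOp (b lam1 lam2 : ℝ) : Fin 2 → OpB := ![e1 b lam1 lam2, e2 b lam1 lam2]

/-- The pair of `f`-generators. -/
def fOp (b lam1 lam2 : ℝ) : Fin 2 → OpB := ![f1 b lam1 lam2, f2 b lam1 lam2]

/-- The pair of `K`-generators. -/
def KOp (b lam1 lam2 : ℝ) : Fin 2 → OpB := ![K1 b lam1 lam2, K2 b lam1 lam2]

/-- The pair of inverse `K`-generators. -/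
def KinvOp (b lam1 lam2 : ℝ) : Fin 2 → OpB := ![K1inv b lam1 lam2, K2inv b lam1 lam2]

/-! ### Auxiliary lemmas -/

lemma Wop_mul' (ℓ ℓ' : (Fin 4 → ℂ) → ℂ) (δ δ' : Fin 4 → ℂ) :
    Wop ℓ δ * Wop ℓ' δ' =
      Wop (fun y => ℓ (y - (2:ℂ)⁻¹ • δ') + ℓ' (y + (2:ℂ)⁻¹ • δ)) (δ + δ') := by
  apply LinearMap.ext; intro f
  funext x
  show Complex.exp (ℓ (x + (2:ℂ)⁻¹ • δ)) * (Complex.exp (ℓ' (x + δ + (2:ℂ)⁻¹ • δ')) * f (x + δ + δ')) = _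
  show _ = Complex.exp (ℓ (x + (2:ℂ)⁻¹ • (δ + δ') - (2:ℂ)⁻¹ • δ') + ℓ' (x + (2:ℂ)⁻¹ • (δ + δ') + (2:ℂ)⁻¹ • δ)) * f (x + (δ + δ'))
  rw [Complex.exp_add]
  have h1 : x + (2:ℂ)⁻¹ • (δ + δ') - (2:ℂ)⁻¹ • δ' = x + (2:ℂ)⁻¹ • δ := by module
  have h2 : x + (2:ℂ)⁻¹ • (δ + δ') + (2:ℂ)⁻¹ • δ = x + δ + (2:ℂ)⁻¹ • δ' := by module
  have h3 : x + δ + δ' = x + (δ + δ') := by module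
  rw [h1, h2, h3, mul_assoc]

lemma smul_Wop (c : ℂ) (ℓ : (Fin 4 → ℂ) → ℂ) (δ : Fin 4 → ℂ) :
    Wop (fun y => c + ℓ y) δ = Complex.exp c • Wop ℓ δ := by
  apply LinearMap.ext; intro f
  funext x
  show Complex.exp (c + ℓ (x + (2:ℂ)⁻¹ • δ)) * f (x + δ)
      = Complex.exp c * (Complex.exp (ℓ (x + (2:ℂ)⁻¹ • δ)) * f (x + δ))
  rw [Complex.exp_add, mul_assoc]

lemma bs_sq (b : ℝ) : ((bs b : ℝ) : ℂ) ^ 2 = (b:ℂ)^2 / 2 := by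
  have h : (bs b)^2 = b^2/2 := by
    rw [bs, div_pow, Real.sq_sqrt (by norm_num : (0:ℝ) ≤ 2)]
  calc ((bs b : ℝ) : ℂ) ^ 2 = (((bs b)^2 : ℝ) : ℂ) := by push_cast; ring
    _ = (b:ℂ)^2/2 := by rw [h]; push_cast; ring

lemma neg_ellB (b lam1 lam2 c1 c2 c3 c4 c5 c6 : ℝ) (δ : Fin 4 → ℂ) :
    Wop (fun x => -(ellB b lam1 lam2 c1 c2 c3 c4 c5 c6 x)) δ
      = Wop (ellB b lam1 lam2 (-c1) (-c2) (-c3) (-c4) (-c5) (-c6)) δ := by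
  congr 1
  funext x
  simp only [ellB]
  push_cast
  ring

lemma Wmul (b lam1 lam2 : ℝ) (c1 c2 c3 c4 c5 c6 d1 d2 d3 d4 c1' c2' c3' c4' c5' c6' d1' d2' d3' d4' : ℝ) :
    Wop (ellB b lam1 lam2 c1 c2 c3 c4 c5 c6) (deltaB b d1 d2 d3 d4)
      * Wop (ellB b lam1 lam2 c1' c2' c3' c4' c5' c6') (deltaB b d1' d2' d3' d4')
    = Complex.exp ((Real.pi : ℂ) * Complex.I * (b:ℂ)^2 *
        ((((c1*d1' + c3*d3' - c1'*d1 - c3'*d3)/2 + (c2*d2' + c4*d4' - c2'*d2 - c4'*d4))/2 : ℝ) : ℂ))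
      • Wop (ellB b lam1 lam2 (c1+c1') (c2+c2') (c3+c3') (c4+c4') (c5+c5') (c6+c6'))
          (deltaB b (d1+d1') (d2+d2') (d3+d3') (d4+d4')) := by
  rw [Wop_mul', ← smul_Wop]
  have hδ : deltaB b d1 d2 d3 d4 + deltaB b d1' d2' d3' d4'
      = deltaB b (d1+d1') (d2+d2') (d3+d3') (d4+d4') := by
    funext i
    fin_cases i <;>
      simp [deltaB] <;> push_cast <;> ring
  rw [hδ]
  congr 1
  funext y
  simp only [ellB, deltaB]
  have hb2 := bs_sq b
  have e0 : ∀ (v w : Fin 4 → ℂ) (i : Fin 4), (v + w) i = v i + w i := fun _ _ _ => rfl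
  have e1 : ∀ (v w : Fin 4 → ℂ) (i : Fin 4), (v - w) i = v i - w i := fun _ _ _ => rfl
  have e2 : ∀ (c : ℂ) (v : Fin 4 → ℂ) (i : Fin 4), (c • v) i = c * v i := fun _ _ _ => rfl
  simp only [e0, e1, e2]
  simp only [Matrix.cons_val_zero, Matrix.cons_val_one, Matrix.head_cons,
    Matrix.cons_val_two, Matrix.tail_cons, Matrix.cons_val_three]
  push_cast
  linear_combination ((Real.pi:ℂ) * Complex.I *
    ((c1:ℂ)*d1' + (c3:ℂ)*d3' - (c1':ℂ)*d1 - (c3':ℂ)*d3)/2) * hb2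
lemma deltaB_zero (b : ℝ) : deltaB b 0 0 0 0 = 0 := by
  funext i; fin_cases i <;> simp [deltaB]

lemma hqs (b : ℝ) : qs b = Complex.exp ((Real.pi:ℂ) * Complex.I * (b:ℂ)^2 * (1/2)) := by
  rw [qs, bs_sq]; congr 1; ring

lemma hqq (b : ℝ) : qq b = Complex.exp ((Real.pi:ℂ) * Complex.I * (b:ℂ)^2) := rfl

/-- the `[e_i, f_j]` relations for the type-B₂ positive representation
corresponding to `w₀ = s₂s₁s₂s₁`. -/
theorem B2'_ef_relations (b lam1 lam2 : ℝ) (hb0 : 0 < b) (hb1 : b < 1)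
    (hirr : Irrational (b ^ 2)) :
    e1 b lam1 lam2 * f2 b lam1 lam2 = f2 b lam1 lam2 * e1 b lam1 lam2 ∧
    e2 b lam1 lam2 * f1 b lam1 lam2 = f1 b lam1 lam2 * e2 b lam1 lam2 ∧
    e1 b lam1 lam2 * f1 b lam1 lam2 - f1 b lam1 lam2 * e1 b lam1 lam2
      = (qs b - (qs b)⁻¹) • (K1inv b lam1 lam2 - K1 b lam1 lam2) ∧
    e2 b lam1 lam2 * f2 b lam1 lam2 - f2 b lam1 lam2 * e2 b lam1 lam2
      = (qq b - (qq b)⁻¹) • (K2inv b lam1 lam2 - K2 b lam1 lam2) := by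
  refine ⟨?_, ?_, ?_, ?_⟩
  · simp only [e1, f2, brB, neg_ellB, add_mul, mul_add, Wmul]
    norm_num
    abel
  · simp only [e2, f1, brB, neg_ellB, add_mul, mul_add, smul_mul_assoc, mul_smul_comm,
      smul_add, Wmul]
    norm_num
    simp only [hqs, ← Complex.exp_neg, smul_smul, add_smul, add_mul, ← Complex.exp_add]
    match_scalars <;>
      (try simp only [← Complex.exp_neg, ← Complex.exp_add, Complex.exp_zero, one_mul, mul_one]) <;>
      ring_nf
  · simp only [e1, f1, K1, K1inv, brB, neg_ellB, add_mul, mul_add, smul_mul_assoc,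
      mul_smul_comm, smul_add, smul_sub, Wmul]
    norm_num
    simp only [deltaB_zero, hqs, ← Complex.exp_neg, smul_smul, add_smul, sub_smul, add_mul,
      ← Complex.exp_add]
    match_scalars <;>
      (try simp only [← Complex.exp_neg, ← Complex.exp_add, Complex.exp_zero, one_mul, mul_one]) <;>
      ring_nf
  · simp only [e2, f2, K2, K2inv, brB, neg_ellB, add_mul, mul_add, smul_mul_assoc,
      mul_smul_comm, smul_add, smul_sub, Wmul]
    norm_num
    simp only [deltaB_zero, hqs, hqq, ← Complex.exp_neg, smul_smul, add_smul, sub_smul, add_mul,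
      ← Complex.exp_add]
    match_scalars <;>
      (try simp only [← Complex.exp_neg, ← Complex.exp_add, Complex.exp_zero, one_mul, mul_one]) <;>
      ring_nf

end
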